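/- arXiv:2208.09855 — 2 statements merged into one kernel-verified Lean document; each statement's English description precedes it below -/
import Mathlib

section
/- Fix a mutation rate μ ∈ (0,1]. Let π = π^{μ,r} and π' = π^{μ,r'} be stationary points of RMD with interior reference profiles r and r' respectively. Then Σ_{i=1}^{2} Σ_{a∈A_i} r'_i(a) ( √(π_i(a)/π'_i(a)) − √(π'_i(a)/π_i(a)) )² ≤ Σ_{i=1}^{2} Σ_{a∈A_i} |r_i(a) − r'_i(a)| / π_i(a). -/
open Finset Real

noncomputable section

/-- `p` is a point of the probability simplex over `A`. -/
def isSimplex {A : Type*} [Fintype A] (p : A → ℝ) : Prop :=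
  (∀ a, 0 ≤ p a) ∧ ∑ a, p a = 1

/-- `p` is a point of the relative interior of the probability simplex over `A`. -/
def isInterior {A : Type*} [Fintype A] (p : A → ℝ) : Prop :=
  (∀ a, 0 < p a) ∧ ∑ a, p a = 1

/-- Player 1's expected utility in the zero-sum game with payoff `u`. -/
def v1 {A1 A2 : Type*} [Fintype A1] [Fintype A2] (u : A1 → A2 → ℝ)
    (x : A1 → ℝ) (y : A2 → ℝ) : ℝ :=
  ∑ a, ∑ b, x a * y b * u a b

/-- Player 1's conditional expected utility of action `a` against `y`. -/
def q1 {A1 A2 : Type*} [Fintype A2] (u : A1 → A2 → ℝ) (y : A2 → ℝ) (a : A1) : ℝ :=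
  ∑ b, y b * u a b

/-- Player 2's conditional expected utility of action `b` against `x` (utility `-u`). -/
def q2 {A1 A2 : Type*} [Fintype A1] (u : A1 → A2 → ℝ) (x : A1 → ℝ) (b : A2) : ℝ :=
  ∑ a, x a * (- u a b)

/-- Kullback–Leibler divergence. -/
def KL {A : Type*} [Fintype A] (p q : A → ℝ) : ℝ :=
  ∑ a, p a * Real.log (p a / q a)

/-- Sum of KL divergences over the two players. -/
def KL2 {A1 A2 : Type*} [Fintype A1] [Fintype A2]
    (σ σ' : (A1 → ℝ) × (A2 → ℝ)) : ℝ :=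
  KL σ.1 σ'.1 + KL σ.2 σ'.2

/-- `σ` is a stationary point of the replicator-mutator dynamics with mutation
rate `μ` and reference profile `r`. -/
def isStationary {A1 A2 : Type*} [Fintype A1] [Fintype A2] (u : A1 → A2 → ℝ) (μ : ℝ)
    (r σ : (A1 → ℝ) × (A2 → ℝ)) : Prop :=
  isSimplex σ.1 ∧ isSimplex σ.2 ∧
  (∀ a, σ.1 a * (q1 u σ.2 a - v1 u σ.1 σ.2) + μ * (r.1 a - σ.1 a) = 0) ∧
  (∀ b, σ.2 b * (q2 u σ.1 b - (- v1 u σ.1 σ.2)) + μ * (r.2 b - σ.2 b) = 0)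

/-- One multiplicative-weights step with learning rate `η` and gain vector `g`. -/
def mwuStep {A : Type*} [Fintype A] (η : ℝ) (g p : A → ℝ) : A → ℝ :=
  fun a => p a * Real.exp (η * g a) / ∑ a', p a' * Real.exp (η * g a')

/-- Player 1's mutation gradient. -/
def qmu1 {A1 A2 : Type*} [Fintype A2] (u : A1 → A2 → ℝ) (μ : ℝ) (r1 : A1 → ℝ)
    (x : A1 → ℝ) (y : A2 → ℝ) (a : A1) : ℝ :=
  q1 u y a + μ / x a * (r1 a - x a)

/-- Player 2's mutation gradient. -/
def qmu2 {A1 A2 : Type*} [Fintype A1] (u : A1 → A2 → ℝ) (μ : ℝ) (r2 : A2 → ℝ)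
    (x : A1 → ℝ) (y : A2 → ℝ) (b : A2) : ℝ :=
  q2 u x b + μ / y b * (r2 b - y b)

/-- `σ` is a trajectory of M2WU with full feedback, learning rates `η`. -/
def isM2WU {A1 A2 : Type*} [Fintype A1] [Fintype A2] (u : A1 → A2 → ℝ) (μ : ℝ)
    (r : (A1 → ℝ) × (A2 → ℝ)) (η : ℕ → ℝ) (σ : ℕ → (A1 → ℝ) × (A2 → ℝ)) : Prop :=
  ∀ t, (σ (t+1)).1 = mwuStep (η t) (qmu1 u μ r.1 (σ t).1 (σ t).2) (σ t).1 ∧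
       (σ (t+1)).2 = mwuStep (η t) (qmu2 u μ r.2 (σ t).1 (σ t).2) (σ t).2

/-- Exploitability of a strategy profile. -/
def explt {A1 A2 : Type*} [Fintype A1] [Fintype A2] (u : A1 → A2 → ℝ)
    (σ : (A1 → ℝ) × (A2 → ℝ)) : ℝ :=
  (⨆ x : {p : A1 → ℝ // isSimplex p}, v1 u x.1 σ.2) +
  (⨆ y : {p : A2 → ℝ // isSimplex p}, - v1 u σ.1 y.1)

/-- Nash equilibrium of the two-player zero-sum game with payoff `u`. -/
def isNash {A1 A2 : Type*} [Fintype A1] [Fintype A2] (u : A1 → A2 → ℝ)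
    (σ : (A1 → ℝ) × (A2 → ℝ)) : Prop :=
  isSimplex σ.1 ∧ isSimplex σ.2 ∧
  (∀ y, isSimplex y → v1 u σ.1 σ.2 ≤ v1 u σ.1 y) ∧
  (∀ x, isSimplex x → v1 u x σ.2 ≤ v1 u σ.1 σ.2)

/-- ℓ¹ norm of a finitely supported vector. -/
def l1norm {A : Type*} [Fintype A] (p : A → ℝ) : ℝ := ∑ a, |p a|

/-- Euclidean distance between two profiles (concatenated coordinates). -/
def dist2 {A1 A2 : Type*} [Fintype A1] [Fintype A2]
    (σ σ' : (A1 → ℝ) × (A2 → ℝ)) : ℝ :=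
  Real.sqrt ((∑ a, (σ.1 a - σ'.1 a) ^ 2) + (∑ b, (σ.2 b - σ'.2 b) ^ 2))

/-!
Dividing the stationarity condition by `π_i(a)` gives `q_i(a) - v_i = μ (1 - r_i(a) / π_i(a))`.
Pair the difference of these gradients at `π` and `π'` with `π - π'` and sum over both players:
the payoff terms cancel because the game is zero-sum, and the values `v_i` drop out because
`∑ (π_i - π'_i) = 0`. What is left is `∑ r' (π - π')² / (π π') = ∑ (π - π') (r - r') / π`;
its left side is that of the theorem since `(√(p/q) - √(q/p))² = (p - q)² / (p q)`, and its
right side is bounded using `|π_i(a) - π'_i(a)| ≤ 1`.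
-/

lemma sqrt_div_sub_sqrt_div_sq {p q : ℝ} (hp : 0 < p) (hq : 0 < q) :
    (√(p / q) - √(q / p)) ^ 2 = (p - q) ^ 2 / (p * q) := by
  have hprod : √(p / q) * √(q / p) = 1 := by
    rw [← Real.sqrt_mul (by positivity), div_mul_div_cancel₀ hq.ne', div_self hp.ne',
      Real.sqrt_one]
  rw [sub_sq, mul_assoc, hprod, Real.sq_sqrt (by positivity), Real.sq_sqrt (by positivity)]
  field_simp
  ring

lemma sum_sub_mul_q1_sub_add_sum_sub_mul_q2_sub {A1 A2 : Type*} [Fintype A1] [Fintype A2]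
    (u : A1 → A2 → ℝ) (x x' : A1 → ℝ) (y y' : A2 → ℝ) :
    ∑ a, (x a - x' a) * (q1 u y a - q1 u y' a) +
      ∑ b, (y b - y' b) * (q2 u x b - q2 u x' b) = 0 := by
  simp only [q1, q2, ← sum_sub_distrib, mul_sum]
  rw [sum_comm (f := fun b a => _), ← sum_add_distrib]
  exact sum_eq_zero fun a _ => by
    rw [← sum_add_distrib]; exact sum_eq_zero fun b _ => by ring

section

variable {A : Type*} [Fintype A]

lemma le_one_of_isSimplex {p : A → ℝ} (hp : isSimplex p) (a : A) :
    p a ≤ 1 :=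
  hp.2 ▸ single_le_sum (fun i _ => hp.1 i) (mem_univ a)

lemma sum_sub_mul_div_le_sum_abs_div {p p' : A → ℝ}
    (hp : isSimplex p) (hp' : isSimplex p') (ρ ρ' : A → ℝ) :
    ∑ a, (p a - p' a) * (ρ a - ρ' a) / p a ≤ ∑ a, |ρ a - ρ' a| / p a := by
  refine sum_le_sum fun a _ => div_le_div_of_nonneg_right ?_ (hp.1 a)
  have hdiff : |p a - p' a| ≤ 1 := abs_sub_le_of_nonneg_of_le (hp.1 a)
    (le_one_of_isSimplex hp a) (hp'.1 a) (le_one_of_isSimplex hp' a)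
  calc (p a - p' a) * (ρ a - ρ' a) ≤ |p a - p' a| * |ρ a - ρ' a| := by
        rw [← abs_mul]; exact le_abs_self _
    _ ≤ |ρ a - ρ' a| := mul_le_of_le_one_left (abs_nonneg _) hdiff

lemma mul_sum_sqrt_div_sub_sq_eq {μ c c' : ℝ}
    {x x' ρ ρ' g g' : A → ℝ} (hx : ∀ a, 0 < x a) (hx' : ∀ a, 0 < x' a)
    (hsum : ∑ a, x a = ∑ a, x' a)
    (h : ∀ a, x a * (g a - c) + μ * (ρ a - x a) = 0)
    (h' : ∀ a, x' a * (g' a - c') + μ * (ρ' a - x' a) = 0) :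
    μ * ∑ a, ρ' a * (√(x a / x' a) - √(x' a / x a)) ^ 2 =
      μ * ∑ a, (x a - x' a) * (ρ a - ρ' a) / x a + ∑ a, (x a - x' a) * (g a - g' a) := by
  have hterm : ∀ a, μ * (ρ' a * (√(x a / x' a) - √(x' a / x a)) ^ 2) =
      μ * ((x a - x' a) * (ρ a - ρ' a) / x a) + (x a - x' a) * (g a - g' a)
        - (x a - x' a) * (c - c') := by
    intro a
    have hg : g a - c = μ * (x a - ρ a) / x a := by
      rw [eq_div_iff (hx a).ne']; linear_combination h a
    have hg' : g' a - c' = μ * (x' a - ρ' a) / x' a := by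
      rw [eq_div_iff (hx' a).ne']; linear_combination h' a
    rw [sqrt_div_sub_sqrt_div_sq (hx a) (hx' a),
      show g a - g' a = (g a - c) - (g' a - c') + (c - c') by ring, hg, hg']
    field_simp [(hx a).ne', (hx' a).ne']
    ring
  have hshift : ∑ a, (x a - x' a) * (c - c') = 0 := by
    rw [← sum_mul, sum_sub_distrib, hsum, sub_self, zero_mul]
  simp only [mul_sum, hterm, sum_sub_distrib, sum_add_distrib, hshift,
    sub_zero]

end

theorem stationary_points_reference_perturbation_general {A1 A2 : Type*}
    [Fintype A1] [Fintype A2]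
    (u : A1 → A2 → ℝ)
    (μ : ℝ) (hμ : 0 < μ ∧ μ ≤ 1)
    (r r' : (A1 → ℝ) × (A2 → ℝ))
    (σ σ' : (A1 → ℝ) × (A2 → ℝ))
    (hσ : isStationary u μ r σ) (hσ' : isStationary u μ r' σ')
    (hσ1 : isInterior σ.1) (hσ2 : isInterior σ.2)
    (hσ1' : isInterior σ'.1) (hσ2' : isInterior σ'.2) :
    (∑ a, r'.1 a * (Real.sqrt (σ.1 a / σ'.1 a) - Real.sqrt (σ'.1 a / σ.1 a)) ^ 2) +
    (∑ b, r'.2 b * (Real.sqrt (σ.2 b / σ'.2 b) - Real.sqrt (σ'.2 b / σ.2 b)) ^ 2) ≤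
    (∑ a, |r.1 a - r'.1 a| / σ.1 a) + (∑ b, |r.2 b - r'.2 b| / σ.2 b) := by
  obtain ⟨hs1, hs2, hstat1, hstat2⟩ := hσ
  obtain ⟨hs1', hs2', hstat1', hstat2'⟩ := hσ'
  have h1 := mul_sum_sqrt_div_sub_sq_eq hσ1.1 hσ1'.1 (by rw [hs1.2, hs1'.2]) hstat1 hstat1'
  have h2 := mul_sum_sqrt_div_sub_sq_eq hσ2.1 hσ2'.1 (by rw [hs2.2, hs2'.2]) hstat2 hstat2'
  have hzero := sum_sub_mul_q1_sub_add_sum_sub_mul_q2_sub u σ.1 σ'.1 σ.2 σ'.2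
  have hidentity :
      (∑ a, r'.1 a * (√(σ.1 a / σ'.1 a) - √(σ'.1 a / σ.1 a)) ^ 2) +
        (∑ b, r'.2 b * (√(σ.2 b / σ'.2 b) - √(σ'.2 b / σ.2 b)) ^ 2) =
      (∑ a, (σ.1 a - σ'.1 a) * (r.1 a - r'.1 a) / σ.1 a) +
        ∑ b, (σ.2 b - σ'.2 b) * (r.2 b - r'.2 b) / σ.2 b :=
    mul_left_cancel₀ hμ.1.ne' (by linear_combination h1 + h2 + hzero)
  rw [hidentity]
  exact add_le_add (sum_sub_mul_div_le_sum_abs_div hs1 hs1' _ _)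
    (sum_sub_mul_div_le_sum_abs_div hs2 hs2' _ _)

/-- **Key estimate comparing stationary points with different reference profiles.** -/
theorem stationary_points_reference_perturbation {A1 A2 : Type*}
    [Fintype A1] [Fintype A2]
    (u : A1 → A2 → ℝ)
    (μ : ℝ) (hμ : 0 < μ ∧ μ ≤ 1)
    (r r' : (A1 → ℝ) × (A2 → ℝ))
    (hr1 : isInterior r.1) (hr2 : isInterior r.2)
    (hr1' : isInterior r'.1) (hr2' : isInterior r'.2)
    (σ σ' : (A1 → ℝ) × (A2 → ℝ))
    (hσ : isStationary u μ r σ) (hσ' : isStationary u μ r' σ')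
    (hσ1 : isInterior σ.1) (hσ2 : isInterior σ.2)
    (hσ1' : isInterior σ'.1) (hσ2' : isInterior σ'.2) :
    (∑ a, r'.1 a * (Real.sqrt (σ.1 a / σ'.1 a) - Real.sqrt (σ'.1 a / σ.1 a)) ^ 2) +
    (∑ b, r'.2 b * (Real.sqrt (σ.2 b / σ'.2 b) - Real.sqrt (σ'.2 b / σ.2 b)) ^ 2) ≤
    (∑ a, |r.1 a - r'.1 a| / σ.1 a) + (∑ b, |r.2 b - r'.2 b| / σ.2 b) :=
  stationary_points_reference_perturbation_general u μ hμ r r' σ σ' hσ hσ' hσ1 hσ2 hσ1' hσ2'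
end
end

section
/- Fix a mutation rate μ ∈ (0,1] and let r ∈ Δ°(A₁) × Δ°(A₂) be an interior reference profile. If r itself is a stationary point of RMD with reference r (i.e., π^{μ,r} = r), then r is a Nash equilibrium of the game. -/
open Finset Real

noncomputable section

/-
At a profile `r` that is stationary for its own reference, the mutation term `μ (r(a) - r(a))`
vanishes, so the stationarity equations read `r(a) (q(a) - v) = 0`. As `r` is interior, every
action of either player earns exactly the value `v` against the opponent's strategy: `r` is an
equalizer, and every unilateral deviation then earns `v` too.
-/

theorem isInterior.isSimplex {A : Type*} [Fintype A] {p : A → ℝ} (hp : isInterior p) :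
    isSimplex p :=
  ⟨fun a => (hp.1 a).le, hp.2⟩

theorem sum_mul_eq_of_forall_eq {A : Type*} [Fintype A] {p g : A → ℝ} {c : ℝ}
    (hp : ∑ a, p a = 1) (hg : ∀ a, g a = c) : ∑ a, p a * g a = c := by
  simp only [hg, ← Finset.sum_mul, hp, one_mul]

section ZeroSum

variable {A1 A2 : Type*} [Fintype A1] [Fintype A2] (u : A1 → A2 → ℝ)

theorem v1_eq_sum_mul_q1 (x : A1 → ℝ) (y : A2 → ℝ) :
    v1 u x y = ∑ a, x a * q1 u y a := by
  simp only [v1, q1, Finset.mul_sum, mul_assoc]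

theorem v1_eq_neg_sum_mul_q2 (x : A1 → ℝ) (y : A2 → ℝ) :
    v1 u x y = -∑ b, y b * q2 u x b := by
  simp only [v1, q2, Finset.mul_sum, ← Finset.sum_neg_distrib]
  rw [Finset.sum_comm]
  refine Finset.sum_congr rfl fun b _ => Finset.sum_congr rfl fun a _ => ?_
  ring

theorem q1_eq_v1_of_isStationary_self {μ : ℝ} {r : (A1 → ℝ) × (A2 → ℝ)}
    (hfix : isStationary u μ r r) {a : A1} (ha : r.1 a ≠ 0) :
    q1 u r.2 a = v1 u r.1 r.2 := by
  have h := hfix.2.2.1 a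
  rw [sub_self, mul_zero, add_zero, mul_eq_zero] at h
  exact sub_eq_zero.mp (h.resolve_left ha)

theorem q2_eq_neg_v1_of_isStationary_self {μ : ℝ} {r : (A1 → ℝ) × (A2 → ℝ)}
    (hfix : isStationary u μ r r) {b : A2} (hb : r.2 b ≠ 0) :
    q2 u r.1 b = -v1 u r.1 r.2 := by
  have h := hfix.2.2.2 b
  rw [sub_self, mul_zero, add_zero, mul_eq_zero] at h
  exact sub_eq_zero.mp (h.resolve_left hb)

theorem isNash_of_indifferent {r : (A1 → ℝ) × (A2 → ℝ)}
    (hr1 : isSimplex r.1) (hr2 : isSimplex r.2)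
    (hq1 : ∀ a, q1 u r.2 a = v1 u r.1 r.2) (hq2 : ∀ b, q2 u r.1 b = -v1 u r.1 r.2) :
    isNash u r := by
  refine ⟨hr1, hr2, fun y hy => ?_, fun x hx => ?_⟩
  · rw [v1_eq_neg_sum_mul_q2 u r.1 y, sum_mul_eq_of_forall_eq hy.2 hq2, neg_neg]
  · rw [v1_eq_sum_mul_q1 u x r.2, sum_mul_eq_of_forall_eq hx.2 hq1]

end ZeroSum

theorem fixed_reference_is_nash_general {A1 A2 : Type*} [Fintype A1] [Fintype A2]
    (u : A1 → A2 → ℝ)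
    (μ : ℝ)
    (r : (A1 → ℝ) × (A2 → ℝ)) (hr1 : isInterior r.1) (hr2 : isInterior r.2)
    (hfix : isStationary u μ r r) :
    isNash u r :=
  isNash_of_indifferent u hr1.isSimplex hr2.isSimplex
    (fun a => q1_eq_v1_of_isStationary_self u hfix (hr1.1 a).ne')
    (fun b => q2_eq_neg_v1_of_isStationary_self u hfix (hr2.1 b).ne')

/-- **Lemma 9 (a reference profile that is its own stationary point is a Nash equilibrium).** -/
theorem fixed_reference_is_nash {A1 A2 : Type*} [Fintype A1] [Fintype A2]
    (u : A1 → A2 → ℝ)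
    (μ : ℝ) (hμ : 0 < μ ∧ μ ≤ 1)
    (r : (A1 → ℝ) × (A2 → ℝ)) (hr1 : isInterior r.1) (hr2 : isInterior r.2)
    (hfix : isStationary u μ r r) :
    isNash u r :=
  fixed_reference_is_nash_general u μ r hr1 hr2 hfix
end
end
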